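/- For 0 < p < ∞, the space Λᵖ₂(1) coincides with Lᵖ(ℝ²): for every measurable f on ℝ², ∫_{ℝ²} |f(x)|ᵖ dx = ∫_{ℝ₊²} (f₂*(x))ᵖ dx. -/

import Mathlib

/-!
Both sides are layer-cake integrals. For the level sets `E t = {t < |f|}` one has
`|f x| = |{t > 0 | x ∈ E t}|`, and `f₂* x = |{t > 0 | x ∈ (E t)*}|` by definition. Both families
decrease in `t`, so in either case `∫ F ^ p = ∫₀^∞ p t^(p-1) |A t| dt`, and it remains to see
`|E*| = |E|`. The decreasing rearrangement is the generalized inverse of the distribution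
function, `y < φ_E*(s) ↔ s < |{φ_E > y}|`, so the horizontal section of `E*` at height `y` is
`(0, |{φ_E > y}|)`; by Cavalieri, `|E*| = ∫₀^∞ |{φ_E > y}| dy = ∫ φ_E = |E|`.
-/

open MeasureTheory Set ENNReal Filter

/-- Classical decreasing rearrangement of an `ℝ≥0∞`-valued function. -/
noncomputable def decRe {α : Type*} [MeasurableSpace α] (μ : Measure α)
    (g : α → ℝ≥0∞) (t : ℝ) : ℝ≥0∞ :=
  sInf {l : ℝ≥0∞ | μ {x | l < g x} ≤ ENNReal.ofReal t}

/-- `φ_E(x)`: the measure of the `x`-section of `E`. -/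
noncomputable def phiSec (E : Set (ℝ × ℝ)) (x : ℝ) : ℝ≥0∞ :=
  volume {y : ℝ | (x, y) ∈ E}

/-- The two-dimensional decreasing rearrangement `E*` of a set `E ⊆ ℝ²`. -/
def starSet (E : Set (ℝ × ℝ)) : Set (ℝ × ℝ) :=
  {p | 0 < p.1 ∧ 0 < p.2 ∧ ENNReal.ofReal p.2 < decRe volume (phiSec E) p.1}

/-- The two-dimensional decreasing rearrangement `f₂*` of a function (layer-cake formula). -/
noncomputable def rearr2 (f : ℝ × ℝ → ℝ) (x : ℝ × ℝ) : ℝ≥0∞ :=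
  ∫⁻ t in Set.Ioi (0 : ℝ), (starSet {p | t < |f p|}).indicator (fun _ => (1 : ℝ≥0∞)) x

/-- The open positive quadrant `ℝ₊²`. -/
def Quad : Set (ℝ × ℝ) := Set.Ioi 0 ×ˢ Set.Ioi 0

section Rearrangement

variable {α : Type*} [MeasurableSpace α] (μ : Measure α) (g : α → ℝ≥0∞)

theorem lt_decRe_iff (s : ℝ) (c : ℝ≥0∞) :
    c < decRe μ g s ↔ ∃ b, c < b ∧ ENNReal.ofReal s < μ {x | b < g x} := by
  constructor
  · intro h
    obtain ⟨b, hcb, hbD⟩ := exists_between h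
    refine ⟨b, hcb, lt_of_not_ge fun hb => hbD.not_ge ?_⟩
    exact sInf_le (show b ∈ {l : ℝ≥0∞ | μ {x | l < g x} ≤ ENNReal.ofReal s} from hb)
  · rintro ⟨b, hcb, hb⟩
    refine hcb.trans_le (le_sInf fun l hl => le_of_not_gt fun hlb => hb.not_ge ?_)
    exact (measure_mono fun x hx => hlb.trans hx).trans hl

theorem measure_lt_eq_iSup_add_inv (c : ℝ≥0∞) :
    μ {x | c < g x} = ⨆ n : ℕ, μ {x | c + (n : ℝ≥0∞)⁻¹ < g x} := by
  rw [← Monotone.measure_iUnion]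
  · congr 1
    ext x
    simp only [mem_ofPred_eq, mem_iUnion]
    constructor
    · intro h
      obtain ⟨r, hr0, hr⟩ := ENNReal.lt_iff_exists_add_pos_lt.1 h
      obtain ⟨n, hn⟩ := ENNReal.exists_inv_nat_lt (ENNReal.coe_ne_zero.2 hr0.ne')
      exact ⟨n, lt_of_le_of_lt (by gcongr) hr⟩
    · rintro ⟨n, hn⟩
      exact lt_of_le_of_lt le_self_add hn
  · intro m n hmn x hx
    have hinv : (n : ℝ≥0∞)⁻¹ ≤ (m : ℝ≥0∞)⁻¹ := ENNReal.inv_le_inv.2 (Nat.cast_le.2 hmn)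
    exact lt_of_le_of_lt (add_le_add_right hinv c) hx

theorem lt_decRe_iff_lt_measure (s : ℝ) {c : ℝ≥0∞} (hc : c ≠ ⊤) :
    c < decRe μ g s ↔ ENNReal.ofReal s < μ {x | c < g x} := by
  rw [lt_decRe_iff]
  constructor
  · rintro ⟨b, hcb, hb⟩
    exact hb.trans_le (measure_mono fun x hx => hcb.trans hx)
  · intro h
    rw [measure_lt_eq_iSup_add_inv, lt_iSup_iff] at h
    obtain ⟨n, hn⟩ := h
    exact ⟨c + (n : ℝ≥0∞)⁻¹, ENNReal.lt_add_right hc (by simp), hn⟩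

theorem volume_setOf_pos_ofReal_lt (l : ℝ≥0∞) :
    volume {y : ℝ | 0 < y ∧ ENNReal.ofReal y < l} = l := by
  rcases eq_or_ne l ⊤ with rfl | hl
  · simp only [ENNReal.ofReal_lt_top, and_true]
    exact Real.volume_Ioi
  · have : {y : ℝ | 0 < y ∧ ENNReal.ofReal y < l} = Ioo 0 l.toReal := by
      ext y
      simp only [mem_ofPred_eq, mem_Ioo, and_congr_right_iff]
      exact fun hy => ENNReal.ofReal_lt_iff_lt_toReal hy.le hl
    rw [this, Real.volume_Ioo, sub_zero, ENNReal.ofReal_toReal hl]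

theorem lintegral_eq_lintegral_measure_ofReal_lt [SFinite μ] (hg : Measurable g) :
    ∫⁻ x, g x ∂μ = ∫⁻ y in Ioi 0, μ {x | ENNReal.ofReal y < g x} := by
  set R : Set (α × ℝ) := {q | 0 < q.2 ∧ ENNReal.ofReal q.2 < g q.1}
  have hR : MeasurableSet R := (measurable_snd measurableSet_Ioi).inter
    (measurableSet_lt (ENNReal.measurable_ofReal.comp measurable_snd) (hg.comp measurable_fst))
  calc ∫⁻ x, g x ∂μ = ∫⁻ x, volume (Prod.mk x ⁻¹' R) ∂μ := by
        simp only [R, preimage_ofPred_eq, volume_setOf_pos_ofReal_lt]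
    _ = ∫⁻ y, μ ((fun x => (x, y)) ⁻¹' R) := by
        rw [← Measure.prod_apply hR, Measure.prod_apply_symm hR]
    _ = ∫⁻ y in Ioi 0, μ {x | ENNReal.ofReal y < g x} := by
        rw [← lintegral_indicator measurableSet_Ioi]
        refine lintegral_congr fun y => ?_
        by_cases hy : 0 < y <;> simp [R, hy]

end Rearrangement

section PowerWeight

variable {p : ℝ}

theorem setLIntegral_Ioo_rpow_weight (hp : 0 < p) (c : ℝ) :
    ∫⁻ t in Ioo 0 c, ENNReal.ofReal (p * t ^ (p - 1)) = ENNReal.ofReal c ^ p := by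
  rcases le_or_gt c 0 with hc | hc
  · simp [Ioo_eq_empty_of_le hc, ENNReal.ofReal_eq_zero.2 hc, ENNReal.zero_rpow_of_pos hp]
  have hr : (-1 : ℝ) < p - 1 := by linarith
  have hint : IntegrableOn (fun t : ℝ => p * t ^ (p - 1)) (Ioc 0 c) :=
    ((intervalIntegrable_iff_integrableOn_Ioc_of_le hc.le).1
      (intervalIntegral.intervalIntegrable_rpow' hr)).const_mul p
  have hnn : 0 ≤ᵐ[volume.restrict (Ioc 0 c)] fun t : ℝ => p * t ^ (p - 1) := by
    filter_upwards [ae_restrict_mem measurableSet_Ioc] with t ht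
    exact mul_nonneg hp.le (Real.rpow_nonneg ht.1.le _)
  rw [setLIntegral_congr Ioo_ae_eq_Ioc, ← ofReal_integral_eq_lintegral_ofReal hint hnn,
    ← intervalIntegral.integral_of_le hc.le, intervalIntegral.integral_const_mul,
    integral_rpow (Or.inl hr), sub_add_cancel, Real.zero_rpow hp.ne', sub_zero,
    mul_div_cancel₀ _ hp.ne', ENNReal.ofReal_rpow_of_nonneg hc.le hp.le]

theorem setLIntegral_Ioi_rpow_weight (hp : 0 < p) :
    ∫⁻ t in Ioi 0, ENNReal.ofReal (p * t ^ (p - 1)) = ⊤ := by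
  refine top_unique (le_of_tendsto
    ((ENNReal.tendsto_rpow_at_top hp).comp ENNReal.tendsto_ofReal_atTop) ?_)
  filter_upwards with c
  rw [Function.comp_apply, ← setLIntegral_Ioo_rpow_weight hp]
  exact lintegral_mono_set Ioo_subset_Ioi_self

theorem volume_rpow_eq_setLIntegral_of_isLowerSet (hp : 0 < p) {T : Set ℝ} (hT : IsLowerSet T) :
    volume (T ∩ Ioi 0) ^ p = ∫⁻ t in T ∩ Ioi 0, ENNReal.ofReal (p * t ^ (p - 1)) := by
  by_cases hbdd : BddAbove T
  · set c := sSup T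
    have hIoo : Ioo 0 c ⊆ T ∩ Ioi 0 := by
      intro y hy
      rcases T.eq_empty_or_nonempty with rfl | hne
      · exact absurd hy.2 (by simpa [c] using hy.1.le)
      obtain ⟨b, hbT, hyb⟩ := exists_lt_of_lt_csSup hne hy.2
      exact ⟨hT hyb.le hbT, hy.1⟩
    have hIoc : T ∩ Ioi 0 ⊆ Ioc 0 c := fun y hy => ⟨hy.2, le_csSup hbdd hy.1⟩
    have hae : Ioo 0 c =ᵐ[volume] (T ∩ Ioi 0 : Set ℝ) := by
      refine ae_eq_of_subset_of_measure_ge hIoo ?_ measurableSet_Ioo.nullMeasurableSet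
        ((measure_mono hIoc).trans_lt (by simp)).ne
      calc volume (T ∩ Ioi 0) ≤ volume (Ioc 0 c) := measure_mono hIoc
        _ = volume (Ioo 0 c) := by rw [Real.volume_Ioc, Real.volume_Ioo]
    rw [← measure_congr hae, ← setLIntegral_congr hae, Real.volume_Ioo, sub_zero,
      setLIntegral_Ioo_rpow_weight hp]
  · have hT_univ : T = univ :=
      eq_univ_of_forall fun b => by
        obtain ⟨a, haT, hba⟩ := not_bddAbove_iff.1 hbdd b
        exact hT hba.le haT
    rw [hT_univ, univ_inter, Real.volume_Ioi, ENNReal.top_rpow_of_pos hp,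
      setLIntegral_Ioi_rpow_weight hp]

theorem setLIntegral_indicator_rpow_of_isLowerSet (hp : 0 < p) {T : Set ℝ} (hT : IsLowerSet T) :
    (∫⁻ t in Ioi 0, T.indicator 1 t) ^ p
      = ∫⁻ t in Ioi 0, T.indicator 1 t * ENNReal.ofReal (p * t ^ (p - 1)) := by
  have hTm : MeasurableSet T := hT.ordConnected.measurableSet
  have hind : ∀ t, T.indicator 1 t * ENNReal.ofReal (p * t ^ (p - 1))
      = T.indicator (fun t => ENNReal.ofReal (p * t ^ (p - 1))) t := fun t => by
    by_cases ht : t ∈ T <;> simp [ht]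
  simp only [hind]
  rw [lintegral_indicator_one hTm, lintegral_indicator hTm, Measure.restrict_restrict hTm,
    Measure.restrict_apply hTm, volume_rpow_eq_setLIntegral_of_isLowerSet hp hT]

end PowerWeight

theorem lintegral_rpow_eq_of_antitone {α : Type*} [MeasurableSpace α] (μ : Measure α) [SFinite μ]
    {A : ℝ → Set α} (hA : Antitone A) (hAm : MeasurableSet {r : α × ℝ | r.1 ∈ A r.2})
    {p : ℝ} (hp : 0 < p) :
    ∫⁻ x, (∫⁻ t in Ioi 0, (A t).indicator (fun _ => 1) x) ^ p ∂μ
      = ∫⁻ t in Ioi 0, μ (A t) * ENNReal.ofReal (p * t ^ (p - 1)) := by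
  have hw : Measurable fun t : ℝ => ENNReal.ofReal (p * t ^ (p - 1)) := by fun_prop
  calc ∫⁻ x, (∫⁻ t in Ioi 0, (A t).indicator (fun _ => 1) x) ^ p ∂μ
      = ∫⁻ x, (∫⁻ t in Ioi 0, (A t).indicator (fun _ => 1) x
          * ENNReal.ofReal (p * t ^ (p - 1))) ∂μ :=
        lintegral_congr fun x =>
          setLIntegral_indicator_rpow_of_isLowerSet hp fun _ _ hba ha => hA hba ha
    _ = ∫⁻ t in Ioi 0, (∫⁻ x, (A t).indicator (fun _ => 1) x
          * ENNReal.ofReal (p * t ^ (p - 1)) ∂μ) :=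
        lintegral_lintegral_swap
          ((measurable_const.indicator hAm).mul (hw.comp measurable_snd)).aemeasurable
    _ = ∫⁻ t in Ioi 0, μ (A t) * ENNReal.ofReal (p * t ^ (p - 1)) := by
        refine lintegral_congr fun t => ?_
        have hAt : MeasurableSet (A t) := hAm.preimage measurable_prodMk_right
        rw [lintegral_mul_const _ (measurable_const.indicator hAt), lintegral_indicator hAt,
          setLIntegral_const, one_mul]

theorem setLIntegral_Ioi_indicator_Iio (a : ℝ) :
    ∫⁻ t in Ioi 0, (Iio a).indicator 1 t = ENNReal.ofReal a := by
  rw [lintegral_indicator_one measurableSet_Iio, Measure.restrict_apply measurableSet_Iio,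
    Iio_inter_Ioi, Real.volume_Ioo, sub_zero]

section StarSet

theorem mem_starSet_iff (E : Set (ℝ × ℝ)) (q : ℝ × ℝ) :
    q ∈ starSet E ↔
      0 < q.1 ∧ 0 < q.2 ∧ ENNReal.ofReal q.1 < volume {x | ENNReal.ofReal q.2 < phiSec E x} :=
  and_congr_right' (and_congr_right' (lt_decRe_iff_lt_measure _ _ _ ENNReal.ofReal_ne_top))

theorem starSet_mono {E F : Set (ℝ × ℝ)} (h : E ⊆ F) : starSet E ⊆ starSet F := by
  intro q hq
  rw [mem_starSet_iff] at hq ⊢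
  refine ⟨hq.1, hq.2.1, hq.2.2.trans_le (measure_mono fun x hx => ?_)⟩
  exact (show ENNReal.ofReal q.2 < phiSec E x from hx).trans_le (measure_mono fun y hy => h hy)

theorem starSet_subset_Quad (E : Set (ℝ × ℝ)) : starSet E ⊆ Quad :=
  fun _ hq => ⟨hq.1, hq.2.1⟩

theorem measurableSet_starSet_family {ι : Type*} [MeasurableSpace ι] {E : ι → Set (ℝ × ℝ)}
    (hE : MeasurableSet {r : (ℝ × ℝ) × ι | r.1 ∈ E r.2}) :
    MeasurableSet {r : (ℝ × ℝ) × ι | r.1 ∈ starSet (E r.2)} := by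
  have hphi : Measurable fun r : ℝ × ι => phiSec (E r.2) r.1 :=
    measurable_measure_prodMk_left
      (hE.preimage (measurable_fst.fst.prodMk measurable_snd |>.prodMk measurable_fst.snd))
  have hdist : Measurable fun r : ℝ × ι => volume {x | ENNReal.ofReal r.1 < phiSec (E r.2) x} :=
    measurable_measure_prodMk_left (measurableSet_lt
      (ENNReal.measurable_ofReal.comp measurable_fst.fst)
      (hphi.comp (measurable_snd.prodMk measurable_fst.snd)))
  simp only [mem_starSet_iff]
  exact (measurable_fst.fst measurableSet_Ioi).inter ((measurable_fst.snd measurableSet_Ioi).inter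
    (measurableSet_lt (ENNReal.measurable_ofReal.comp measurable_fst.fst)
      (hdist.comp (measurable_fst.snd.prodMk measurable_snd))))

theorem measurableSet_starSet (E : Set (ℝ × ℝ)) (hE : MeasurableSet E) :
    MeasurableSet (starSet E) :=
  (measurableSet_starSet_family (E := fun _ : Unit => E) (hE.preimage measurable_fst)).preimage
    (measurable_prodMk_right (y := ()))

theorem volume_starSet {E : Set (ℝ × ℝ)} (hE : MeasurableSet E) :
    volume (starSet E) = volume E := by
  calc volume (starSet E)
      = ∫⁻ y, volume ((fun s => (s, y)) ⁻¹' starSet E) := by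
        rw [Measure.volume_eq_prod, Measure.prod_apply_symm (measurableSet_starSet E hE)]
    _ = ∫⁻ y in Ioi 0, volume {x | ENNReal.ofReal y < phiSec E x} := by
        rw [← lintegral_indicator measurableSet_Ioi]
        refine lintegral_congr fun y => ?_
        have hsec : (fun s => (s, y)) ⁻¹' starSet E = {s | 0 < s ∧ 0 < y ∧
            ENNReal.ofReal s < volume {x | ENNReal.ofReal y < phiSec E x}} :=
          ext fun s => mem_starSet_iff E (s, y)
        by_cases hy : 0 < y <;> simp [hsec, hy, volume_setOf_pos_ofReal_lt]
    _ = ∫⁻ x, phiSec E x :=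
        (lintegral_eq_lintegral_measure_ofReal_lt volume _ (measurable_measure_prodMk_left hE)).symm
    _ = volume E := by
        rw [Measure.volume_eq_prod, Measure.prod_apply hE]
        rfl

end StarSet

theorem stmt18 (f : ℝ × ℝ → ℝ) (hf : Measurable f) (p : ℝ) (hp : 0 < p) :
    ∫⁻ x, ENNReal.ofReal |f x| ^ p = ∫⁻ x in Quad, rearr2 f x ^ p := by
  set E : ℝ → Set (ℝ × ℝ) := fun t => {q | t < |f q|}
  have hE : Antitone E := fun _ _ h _ hq => h.trans_lt hq
  have hEm : MeasurableSet {r : (ℝ × ℝ) × ℝ | r.1 ∈ E r.2} :=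
    measurableSet_lt measurable_snd (hf.comp measurable_fst).abs
  calc ∫⁻ x, ENNReal.ofReal |f x| ^ p
      = ∫⁻ x, (∫⁻ t in Ioi 0, (E t).indicator (fun _ => 1) x) ^ p := by
        simp_rw [← setLIntegral_Ioi_indicator_Iio]
        rfl
    _ = ∫⁻ t in Ioi 0, volume (E t) * ENNReal.ofReal (p * t ^ (p - 1)) :=
        lintegral_rpow_eq_of_antitone volume hE hEm hp
    _ = ∫⁻ t in Ioi 0, volume.restrict Quad (starSet (E t)) * ENNReal.ofReal (p * t ^ (p - 1)) :=
        lintegral_congr fun t => by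
          rw [Measure.restrict_eq_self _ (starSet_subset_Quad _),
            volume_starSet (E := E t) (hEm.preimage measurable_prodMk_right)]
    _ = ∫⁻ x in Quad, rearr2 f x ^ p :=
        (lintegral_rpow_eq_of_antitone _ (fun _ _ h => starSet_mono (hE h))
          (measurableSet_starSet_family hEm) hp).symm
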